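/- arXiv:2601.08032 — 15 statements merged into one kernel-verified Lean document; each statement's English description precedes it below -/
import Mathlib

section
/- Let L be a complete lattice that is an X-top lattice for some nonempty X ⊆ L \ {1}, and equip X with the Zariski-like topology. If X is coatomic and X is a normal topological space, then X has the pm-property. -/
/-- The set of maximal elements of `X` in the order induced from `L`. -/
def maximalsIn {L : Type*} [CompleteLattice L] (X : Set L) : Set L :=
  {m | m ∈ X ∧ ∀ y ∈ X, m ≤ y → y = m}

/-- If `L` is an `X`-top complete lattice (`X` nonempty, `X ⊆ L \ {1}`, and the
Zariski-like topology on `X` has as closed sets exactly the varieties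
`V_X(a) = {x ∈ X | a ≤ x}`), `X` is coatomic and `X` is a normal space, then `X`
has the pm-property. -/
theorem stmt_0 {L : Type*} [CompleteLattice L] (X : Set L)
    (hne : X.Nonempty) (hXtop : ∀ x ∈ X, x ≠ ⊤)
    [TopologicalSpace ↥X]
    (hZar : ∀ C : Set ↥X, IsClosed C ↔ ∃ a : L, C = {x : ↥X | a ≤ (x : L)})
    (hcoatomic : ∀ x ∈ X, ∃ m ∈ maximalsIn X, x ≤ m)
    (hnormal : NormalSpace ↥X) :
    ∀ x ∈ X, ∃! m, m ∈ maximalsIn X ∧ x ≤ m := by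
  -- singletons of maximal elements are closed
  have hsingle : ∀ m (hm : m ∈ maximalsIn X),
      IsClosed ({(⟨m, hm.1⟩ : ↥X)} : Set ↥X) := by
    intro m hm
    rw [hZar]
    refine ⟨m, ?_⟩
    ext y
    constructor
    · rintro rfl; exact le_refl m
    · intro h
      exact Subtype.ext (hm.2 y y.2 h)
  intro x hx
  obtain ⟨m, hm, hxm⟩ := hcoatomic x hx
  refine ⟨m, ⟨hm, hxm⟩, ?_⟩
  rintro m' ⟨hm', hxm'⟩
  by_contra hne'
  -- separate the two maximal elements
  have hdisj : Disjoint ({(⟨m', hm'.1⟩ : ↥X)} : Set ↥X) {(⟨m, hm.1⟩ : ↥X)} := by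
    simp only [Set.disjoint_singleton]
    intro h
    exact hne' (congrArg Subtype.val h)
  obtain ⟨U, V, hU, hV, hm'U, hmV, hUV⟩ :=
    hnormal.normal _ _ (hsingle m' hm') (hsingle m hm) hdisj
  -- complements of U and V are closed, hence varieties
  obtain ⟨a, ha⟩ := (hZar Uᶜ).1 (isClosed_compl_iff.2 hU)
  obtain ⟨b, hb⟩ := (hZar Vᶜ).1 (isClosed_compl_iff.2 hV)
  set x' : ↥X := ⟨x, hx⟩
  have hx' : x' ∉ U ∨ x' ∉ V := by
    by_contra h
    push_neg at h
    exact (hUV.ne_of_mem h.1 h.2) rfl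
  rcases hx' with h | h
  · have hax : a ≤ x := by
      have : x' ∈ Uᶜ := h
      rw [ha] at this; exact this
    have : (⟨m', hm'.1⟩ : ↥X) ∈ Uᶜ := by
      rw [ha]; exact le_trans hax hxm'
    exact this (hm'U rfl)
  · have hbx : b ≤ x := by
      have : x' ∈ Vᶜ := h
      rw [hb] at this; exact this
    have : (⟨m, hm.1⟩ : ↥X) ∈ Vᶜ := by
      rw [hb]; exact le_trans hbx hxm
    exact this (hmV rfl)
end

section
/- Let L be a complete lattice that is an X-top lattice for some nonempty X ⊆ L \ {1}, and equip X with the Zariski-like topology. If X is coatomic and Max(X) is a retract of X (i.e., there is a continuous map r : X → Max(X), where Max(X) carries the subspace topology, with r(m) = m for every m ∈ Max(X)), then X has the pm-property. -/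
/-- If `L` is an `X`-top complete lattice (`X` nonempty, `X ⊆ L \ {1}`, with the
Zariski-like topology whose closed sets are exactly the varieties
`V_X(a) = {x ∈ X | a ≤ x}`), `X` is coatomic and `Max(X)` (with the subspace
topology) is a retract of `X`, then `X` has the pm-property. -/
theorem stmt_1 {L : Type*} [CompleteLattice L] (X : Set L)
    (hne : X.Nonempty) (hXtop : ∀ x ∈ X, x ≠ ⊤)
    [TopologicalSpace ↥X]
    (hZar : ∀ C : Set ↥X, IsClosed C ↔ ∃ a : L, C = {x : ↥X | a ≤ (x : L)})
    (hcoatomic : ∀ x ∈ X, ∃ m ∈ maximalsIn X, x ≤ m)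
    (hretract : ∃ r : ↥X → ↥{m : ↥X | (m : L) ∈ maximalsIn X},
      Continuous r ∧ ∀ m : ↥{m : ↥X | (m : L) ∈ maximalsIn X}, r ↑m = m) :
    ∀ x ∈ X, ∃! m, m ∈ maximalsIn X ∧ x ≤ m := by
  -- closure of a singleton in X is the variety above it
  have hclos : ∀ z : ↥X, closure {z} = {y : ↥X | (z : L) ≤ (y : L)} := by
    intro z
    have hcl : IsClosed {y : ↥X | (z : L) ≤ (y : L)} := (hZar _).2 ⟨(z : L), rfl⟩
    apply subset_antisymm
    · exact closure_minimal (by simp [Set.singleton_subset_iff]) hcl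
    · intro t ht
      obtain ⟨a, ha⟩ := (hZar _).1 (isClosed_closure (s := {z}))
      have hz : a ≤ (z : L) := by
        have := subset_closure (Set.mem_singleton z)
        rw [ha] at this; exact this
      rw [ha]; exact le_trans hz ht
  intro x hx
  obtain ⟨m, hm, hxm⟩ := hcoatomic x hx
  refine ⟨m, ⟨hm, hxm⟩, ?_⟩
  obtain ⟨r, hrc, hrfix⟩ := hretract
  set x' : ↥X := ⟨x, hx⟩ with hx'
  have key : ∀ n, n ∈ maximalsIn X → x ≤ n → n = ((r x' : ↥X) : L) := by
    intro n hn hxn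
    set n' : ↥X := ⟨n, hn.1⟩ with hn'
    -- n' is in the closure of {x'}
    have h1 : n' ∈ closure {x'} := by
      rw [hclos x']; exact hxn
    -- the preimage of closure {r x'} under r is closed and contains x'
    have h2 : r n' ∈ closure {r x'} := by
      have hpre : IsClosed (r ⁻¹' closure {r x'}) :=
        IsClosed.preimage hrc isClosed_closure
      have hsub : closure {x'} ⊆ r ⁻¹' closure {r x'} :=
        closure_minimal (Set.singleton_subset_iff.mpr (subset_closure rfl)) hpre
      exact hsub h1
    -- r fixes n'
    have h3 : r n' = ⟨n', hn⟩ := hrfix ⟨n', hn⟩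
    rw [h3] at h2
    -- pass to closure in ↥X via the subtype
    have h4 : ((⟨n', hn⟩ : ↥{m : ↥X | (m : L) ∈ maximalsIn X}) : ↥X)
        ∈ closure ((↑) '' ({r x'} : Set ↥{m : ↥X | (m : L) ∈ maximalsIn X})) :=
      closure_subtype.mp h2
    rw [Set.image_singleton] at h4
    have h5 : ((r x' : ↥X) : L) ≤ (n' : L) := by
      rw [hclos ((r x' : ↥X))] at h4; exact h4
    -- maximality of r x'
    have hmax : ((r x' : ↥X) : L) ∈ maximalsIn X := (r x').2
    exact hmax.2 n hn.1 h5
  intro m' hm'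
  rw [key m' hm'.1 hm'.2, key m hm hxm]
end

section
/- Let L be a complete lattice that is an X-top lattice for some nonempty X ⊆ L \ {1}, and equip X with the Zariski-like topology. Assume X is coatomic, atomic, and Min(X) is finite. Then X is a normal topological space if and only if X has the pm-property. -/
/-- The set of minimal elements of `X` in the order induced from `L`. -/
def minimalsIn {L : Type*} [CompleteLattice L] (X : Set L) : Set L :=
  {m | m ∈ X ∧ ∀ y ∈ X, y ≤ m → y = m}

/-- If `L` is an `X`-top complete lattice (`X` nonempty, `X ⊆ L \ {1}`, with the
Zariski-like topology whose closed sets are exactly the varieties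
`V_X(a) = {x ∈ X | a ≤ x}`), `X` is coatomic, atomic and `Min(X)` is finite, then
`X` is a normal space if and only if `X` has the pm-property. -/
theorem stmt_2 {L : Type*} [CompleteLattice L] (X : Set L)
    (hne : X.Nonempty) (hXtop : ∀ x ∈ X, x ≠ ⊤)
    [TopologicalSpace ↥X]
    (hZar : ∀ C : Set ↥X, IsClosed C ↔ ∃ a : L, C = {x : ↥X | a ≤ (x : L)})
    (hcoatomic : ∀ x ∈ X, ∃ m ∈ maximalsIn X, x ≤ m)
    (hatomic : ∀ x ∈ X, ∃ m ∈ minimalsIn X, m ≤ x)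
    (hminfin : (minimalsIn X).Finite) :
    NormalSpace ↥X ↔ ∀ x ∈ X, ∃! m, m ∈ maximalsIn X ∧ x ≤ m := by
  have hVclosed : ∀ a : L, IsClosed {x : ↥X | a ≤ (x : L)} :=
    fun a => (hZar _).mpr ⟨a, rfl⟩
  have hupward : ∀ (s : Set ↥X), IsClosed s → ∀ x ∈ s, ∀ y : ↥X, (x : L) ≤ (y : L) → y ∈ s := by
    intro s hs x hxs y hxy
    obtain ⟨a, rfl⟩ := (hZar s).mp hs
    exact le_trans hxs hxy
  constructor
  · intro hN x hx
    obtain ⟨m, hm, hxm⟩ := hcoatomic x hx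
    refine ⟨m, ⟨hm, hxm⟩, ?_⟩
    rintro m' ⟨hm', hxm'⟩
    by_contra hne'
    have hsing : ∀ (n : L) (hn : n ∈ maximalsIn X),
        {y : ↥X | n ≤ (y : L)} = {(⟨n, hn.1⟩ : ↥X)} := by
      intro n hn
      ext y
      simp only [Set.mem_setOf_eq, Set.mem_singleton_iff]
      constructor
      · intro h; exact Subtype.ext (hn.2 y y.2 h)
      · rintro rfl; exact le_rfl
    have h1 : IsClosed ({(⟨m', hm'.1⟩ : ↥X)} : Set ↥X) := hsing m' hm' ▸ hVclosed m'
    have h2 : IsClosed ({(⟨m, hm.1⟩ : ↥X)} : Set ↥X) := hsing m hm ▸ hVclosed m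
    have hd : Disjoint ({(⟨m', hm'.1⟩ : ↥X)} : Set ↥X) {(⟨m, hm.1⟩ : ↥X)} := by
      rw [Set.disjoint_singleton_left, Set.mem_singleton_iff]
      intro h
      exact hne' (congrArg Subtype.val h)
    obtain ⟨U, V, hU, hV, hmU, hmV, hUV⟩ := hN.normal _ _ h1 h2 hd
    obtain ⟨a, ha⟩ := (hZar Uᶜ).mp hU.isClosed_compl
    obtain ⟨b, hb⟩ := (hZar Vᶜ).mp hV.isClosed_compl
    have hxcase : (⟨x, hx⟩ : ↥X) ∈ Uᶜ ∨ (⟨x, hx⟩ : ↥X) ∈ Vᶜ := by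
      by_cases h : (⟨x, hx⟩ : ↥X) ∈ U
      · exact Or.inr (fun hv => Set.disjoint_left.mp hUV h hv)
      · exact Or.inl h
    rcases hxcase with h | h
    · -- a ≤ x ≤ m', so m' ∈ Uᶜ, but m' ∈ U
      have hax : a ≤ x := by rw [ha] at h; exact h
      have : (⟨m', hm'.1⟩ : ↥X) ∈ Uᶜ := by rw [ha]; exact le_trans hax hxm'
      exact this (hmU rfl)
    · have hbx : b ≤ x := by rw [hb] at h; exact h
      have : (⟨m, hm.1⟩ : ↥X) ∈ Vᶜ := by rw [hb]; exact le_trans hbx hxm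
      exact this (hmV rfl)
  · intro hpm
    constructor
    intro s t hs ht hst
    have key : ∀ p ∈ minimalsIn X,
        Disjoint {x : ↥X | p ≤ (x : L)} s ∨ Disjoint {x : ↥X | p ≤ (x : L)} t := by
      intro p hp
      by_contra h
      push_neg at h
      obtain ⟨h1, h2⟩ := h
      rw [Set.not_disjoint_iff] at h1 h2
      obtain ⟨x, hxp, hxs⟩ := h1
      obtain ⟨y, hyp, hyt⟩ := h2
      obtain ⟨m, hm, hxm⟩ := hcoatomic (x : L) x.2
      obtain ⟨m', hm', hym⟩ := hcoatomic (y : L) y.2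
      obtain ⟨m₀, hm₀, hu⟩ := hpm p hp.1
      have e1 : m = m₀ := hu m ⟨hm, le_trans hxp hxm⟩
      have e2 : m' = m₀ := hu m' ⟨hm', le_trans hyp hym⟩
      have hms : (⟨m₀, hm₀.1.1⟩ : ↥X) ∈ s := hupward s hs x hxs _ (e1 ▸ hxm)
      have hmt : (⟨m₀, hm₀.1.1⟩ : ↥X) ∈ t := hupward t ht y hyt _ (e2 ▸ hym)
      exact Set.disjoint_left.mp hst hms hmt
    classical
    set P := {q ∈ minimalsIn X | Disjoint {x : ↥X | q ≤ (x : L)} s} with hPdef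
    set Q := {q ∈ minimalsIn X | ¬ Disjoint {x : ↥X | q ≤ (x : L)} s} with hQdef
    have hPfin : P.Finite := hminfin.subset (fun q hq => hq.1)
    have hQfin : Q.Finite := hminfin.subset (fun q hq => hq.1)
    set F : Set ↥X := ⋃ q ∈ P, {x : ↥X | q ≤ (x : L)} with hFdef
    set G : Set ↥X := ⋃ q ∈ Q, {x : ↥X | q ≤ (x : L)} with hGdef
    have hF : IsClosed F := hPfin.isClosed_biUnion (fun q _ => hVclosed q)
    have hG : IsClosed G := hQfin.isClosed_biUnion (fun q _ => hVclosed q)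
    refine ⟨Fᶜ, Gᶜ, hF.isOpen_compl, hG.isOpen_compl, ?_, ?_, ?_⟩
    · intro x hxs hxF
      simp only [hFdef, Set.mem_iUnion, exists_prop] at hxF
      obtain ⟨q, hq, hqx⟩ := hxF
      exact Set.disjoint_left.mp hq.2 hqx hxs
    · intro y hyt hyG
      simp only [hGdef, Set.mem_iUnion, exists_prop] at hyG
      obtain ⟨q, hq, hqy⟩ := hyG
      have hdt := (key q hq.1).resolve_left hq.2
      exact Set.disjoint_left.mp hdt hqy hyt
    · rw [Set.disjoint_left]
      intro x hxF hxG
      obtain ⟨p, hp, hpx⟩ := hatomic (x : L) x.2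
      by_cases h : Disjoint {z : ↥X | p ≤ (z : L)} s
      · exact hxF (Set.mem_biUnion (⟨hp, h⟩ : p ∈ P) hpx)
      · exact hxG (Set.mem_biUnion (⟨hp, h⟩ : p ∈ Q) hpx)
end

section
/- Let L be a complete lattice that is an X-top lattice for some nonempty X ⊆ L \ {1}, and equip X with the Zariski-like topology. Assume X is coatomic, every element of X is completely strongly X-irreducible, and Max(X) is finite. Then Max(X) is a retract of X if and only if X has the pm-property. -/
def IsZariskiTopology {L : Type*} [CompleteLattice L] (X : Set L) [TopologicalSpace X] :
    Prop :=
  ∀ C : Set X, IsClosed C ↔ ∃ a : L, C = {x : X | a ≤ (x : L)}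

abbrev maximalPoints {L : Type*} [CompleteLattice L] (X : Set L) : Set X :=
  {m : X | (m : L) ∈ maximalsIn X}

def HasPMProperty {L : Type*} [CompleteLattice L] (X : Set L) : Prop :=
  ∀ x ∈ X, ∃! m, m ∈ maximalsIn X ∧ x ≤ m

def IsCompletelyStronglyIrreducible {L : Type*} [CompleteLattice L] (X : Set L) (q : L) :
    Prop :=
  ∀ A ⊆ X, sInf A ≤ q → ∃ a ∈ A, a ≤ q

section

variable {L : Type*} [CompleteLattice L] {X : Set L}

theorem HasPMProperty.eq_of_le (hpm : HasPMProperty X) {a m₁ m₂ : L} (ha : a ∈ X)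
    (hm₁ : m₁ ∈ maximalsIn X) (hm₂ : m₂ ∈ maximalsIn X) (h₁ : a ≤ m₁) (h₂ : a ≤ m₂) :
    m₁ = m₂ :=
  (hpm a ha).unique ⟨hm₁, h₁⟩ ⟨hm₂, h₂⟩

noncomputable def HasPMProperty.retraction (hpm : HasPMProperty X) (x : X) :
    maximalPoints X :=
  let h := (hpm x x.2).exists.choose_spec
  ⟨⟨_, h.1.1⟩, h.1⟩

theorem HasPMProperty.retraction_eq_iff (hpm : HasPMProperty X) (x : X)
    (m : maximalPoints X) : hpm.retraction x = m ↔ (x : L) ≤ m := by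
  have h := (hpm x x.2).exists.choose_spec
  refine ⟨fun hxm ↦ hxm ▸ h.2, fun hxm ↦ Subtype.ext (Subtype.ext ?_)⟩
  exact hpm.eq_of_le x.2 h.1 m.2 h.2 hxm

theorem HasPMProperty.retraction_apply_of_maximal (hpm : HasPMProperty X)
    (m : maximalPoints X) : hpm.retraction m = m :=
  (hpm.retraction_eq_iff m m).2 le_rfl

variable [TopologicalSpace X]

theorem IsZariskiTopology.specializes_iff (hZ : IsZariskiTopology X) {x y : X} :
    x ⤳ y ↔ (x : L) ≤ y := by
  rw [specializes_iff_forall_closed]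
  refine ⟨fun h ↦ h _ ((hZ _).2 ⟨x, rfl⟩) le_rfl, fun hxy C hC hx ↦ ?_⟩
  obtain ⟨a, rfl⟩ := (hZ C).1 hC
  exact le_trans hx hxy

theorem IsZariskiTopology.eq_retraction_of_le (hZ : IsZariskiTopology X)
    {r : X → maximalPoints X} (hr : Continuous r) (hrm : ∀ m : maximalPoints X, r m = m)
    {x : X} {m : L} (hm : m ∈ maximalsIn X) (hxm : (x : L) ≤ m) : m = r x := by
  have hspec : r x ⤳ r ⟨m, hm.1⟩ := (hZ.specializes_iff.2 hxm).map hr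
  rw [hrm ⟨⟨m, hm.1⟩, hm⟩, subtype_specializes_iff, hZ.specializes_iff] at hspec
  exact (r x).2.2 m hm.1 hspec

theorem IsZariskiTopology.hasPMProperty_of_retraction (hZ : IsZariskiTopology X)
    (hcoatomic : ∀ x ∈ X, ∃ m ∈ maximalsIn X, x ≤ m)
    {r : X → maximalPoints X} (hr : Continuous r) (hrm : ∀ m : maximalPoints X, r m = m) :
    HasPMProperty X := by
  intro x hx
  obtain ⟨m, hm, hxm⟩ := hcoatomic x hx
  refine ⟨m, ⟨hm, hxm⟩, fun m' ⟨hm', hxm'⟩ ↦ ?_⟩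
  rw [hZ.eq_retraction_of_le hr hrm (x := ⟨x, hx⟩) hm' hxm',
    hZ.eq_retraction_of_le hr hrm (x := ⟨x, hx⟩) hm hxm]

theorem IsZariskiTopology.isClosed_setOf_le (hZ : IsZariskiTopology X)
    (hcsi : ∀ q ∈ X, IsCompletelyStronglyIrreducible X q) (hpm : HasPMProperty X)
    {m : L} (hm : m ∈ maximalsIn X) : IsClosed {x : X | (x : L) ≤ m} := by
  refine (hZ _).2 ⟨sInf {a | a ∈ X ∧ a ≤ m}, Set.ext fun x ↦ ⟨fun hx ↦ sInf_le ⟨x.2, hx⟩, ?_⟩⟩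
  intro hx
  obtain ⟨a, ⟨ha, ham⟩, hax⟩ := hcsi x x.2 _ (fun a ha ↦ ha.1) hx
  obtain ⟨m', ⟨hm', hxm'⟩, -⟩ := hpm x x.2
  rwa [hpm.eq_of_le ha hm hm' ham (hax.trans hxm')]

theorem IsZariskiTopology.isOpen_setOf_le (hZ : IsZariskiTopology X)
    (hcsi : ∀ q ∈ X, IsCompletelyStronglyIrreducible X q) (hpm : HasPMProperty X)
    (hfin : (maximalsIn X).Finite) {m : L} (hm : m ∈ maximalsIn X) :
    IsOpen {x : X | (x : L) ≤ m} := by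
  have hcompl : {x : X | (x : L) ≤ m}ᶜ = ⋃ m' ∈ maximalsIn X \ {m}, {x : X | (x : L) ≤ m'} := by
    ext x
    simp only [Set.mem_compl_iff, Set.mem_ofPred_eq, Set.mem_iUnion, Set.mem_sdiff,
      Set.mem_singleton_iff, exists_prop]
    constructor
    · intro hxm
      obtain ⟨m', ⟨hm', hxm'⟩, -⟩ := hpm x x.2
      exact ⟨m', ⟨hm', by rintro rfl; exact hxm hxm'⟩, hxm'⟩
    · rintro ⟨m', ⟨hm', hne⟩, hxm'⟩ hxm
      exact hne (hpm.eq_of_le x.2 hm' hm hxm' hxm)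
  rw [← isClosed_compl_iff, hcompl]
  exact hfin.sdiff.isClosed_biUnion fun m' hm' ↦ hZ.isClosed_setOf_le hcsi hpm hm'.1

theorem HasPMProperty.continuous_retraction (hpm : HasPMProperty X)
    (hZ : IsZariskiTopology X) (hcsi : ∀ q ∈ X, IsCompletelyStronglyIrreducible X q)
    (hfin : (maximalsIn X).Finite) : Continuous hpm.retraction := by
  refine continuous_def.2 fun U _ ↦ ?_
  rw [← Set.biUnion_preimage_singleton]
  refine isOpen_biUnion fun m _ ↦ ?_
  have hfibre : hpm.retraction ⁻¹' {m} = {x : X | (x : L) ≤ m} :=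
    Set.ext fun x ↦ hpm.retraction_eq_iff x m
  rw [hfibre]
  exact hZ.isOpen_setOf_le hcsi hpm hfin m.2

end

theorem stmt_3_general {L : Type*} [CompleteLattice L] (X : Set L)
    [TopologicalSpace ↥X]
    (hZar : ∀ C : Set ↥X, IsClosed C ↔ ∃ a : L, C = {x : ↥X | a ≤ (x : L)})
    (hcoatomic : ∀ x ∈ X, ∃ m ∈ maximalsIn X, x ≤ m)
    (hcsi : ∀ q ∈ X, ∀ A ⊆ X, sInf A ≤ q → ∃ a ∈ A, a ≤ q)
    (hmaxfin : (maximalsIn X).Finite) :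
    (∃ r : ↥X → ↥{m : ↥X | (m : L) ∈ maximalsIn X},
        Continuous r ∧ ∀ m : ↥{m : ↥X | (m : L) ∈ maximalsIn X}, r ↑m = m) ↔
      ∀ x ∈ X, ∃! m, m ∈ maximalsIn X ∧ x ≤ m := by
  have hZ : IsZariskiTopology X := hZar
  constructor
  · rintro ⟨r, hr, hrm⟩
    exact hZ.hasPMProperty_of_retraction hcoatomic hr hrm
  · intro (hpm : HasPMProperty X)
    exact ⟨hpm.retraction, hpm.continuous_retraction hZ hcsi hmaxfin,
      hpm.retraction_apply_of_maximal⟩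

/-- If `L` is an `X`-top complete lattice (`X` nonempty, `X ⊆ L \ {1}`, with the
Zariski-like topology whose closed sets are exactly the varieties
`V_X(a) = {x ∈ X | a ≤ x}`), `X` is coatomic, every element of `X` is completely
strongly `X`-irreducible and `Max(X)` is finite, then `Max(X)` is a retract of
`X` if and only if `X` has the pm-property. -/
theorem stmt_3 {L : Type*} [CompleteLattice L] (X : Set L)
    (hne : X.Nonempty) (hXtop : ∀ x ∈ X, x ≠ ⊤)
    [TopologicalSpace ↥X]
    (hZar : ∀ C : Set ↥X, IsClosed C ↔ ∃ a : L, C = {x : ↥X | a ≤ (x : L)})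
    (hcoatomic : ∀ x ∈ X, ∃ m ∈ maximalsIn X, x ≤ m)
    (hcsi : ∀ q ∈ X, ∀ A ⊆ X, sInf A ≤ q → ∃ a ∈ A, a ≤ q)
    (hmaxfin : (maximalsIn X).Finite) :
    (∃ r : ↥X → ↥{m : ↥X | (m : L) ∈ maximalsIn X},
        Continuous r ∧ ∀ m : ↥{m : ↥X | (m : L) ∈ maximalsIn X}, r ↑m = m) ↔
      ∀ x ∈ X, ∃! m, m ∈ maximalsIn X ∧ x ≤ m :=
  stmt_3_general X hZar hcoatomic hcsi hmaxfin
end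

section
/- Let L be a complete lattice that is an X-top lattice for some nonempty X ⊆ L \ {1}, and equip X with the Zariski-like topology. If X is coatomic and atomic with both Min(X) and Max(X) finite, then the following are equivalent: (1) X is a normal topological space; (2) X has the pm-property; (3) Max(X) is a retract of X. -/
/-- The "fiber" `{x ∈ X | x ≤ m}` over a maximal element `m` is closed. -/
lemma fib_closed {L : Type*} [CompleteLattice L] (X : Set L)
    [TopologicalSpace ↥X]
    (hZar : ∀ C : Set ↥X, IsClosed C ↔ ∃ a : L, C = {x : ↥X | a ≤ (x : L)})
    (hatomic : ∀ x ∈ X, ∃ m ∈ minimalsIn X, m ≤ x)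
    (hminfin : (minimalsIn X).Finite)
    (h2 : ∀ x ∈ X, ∃! m, m ∈ maximalsIn X ∧ x ≤ m)
    {m : L} (hm : m ∈ maximalsIn X) :
    IsClosed {x : ↥X | (x : L) ≤ m} := by
  have hrw : {x : ↥X | (x : L) ≤ m}
      = ⋃ p ∈ {p ∈ minimalsIn X | p ≤ m}, {x : ↥X | p ≤ (x : L)} := by
    ext x
    simp only [Set.mem_setOf_eq, Set.mem_iUnion, exists_prop]
    constructor
    · intro hxm
      obtain ⟨p, hp, hpx⟩ := hatomic (↑x) x.2
      exact ⟨p, ⟨hp, hpx.trans hxm⟩, hpx⟩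
    · rintro ⟨p, ⟨hpmin, hpm⟩, hpx⟩
      obtain ⟨M, hM, hMuniq⟩ := h2 p hpmin.1
      obtain ⟨m', ⟨hm', hxm'⟩, _⟩ := h2 (↑x) x.2
      have e1 : m = M := hMuniq m ⟨hm, hpm⟩
      have e2 : m' = M := hMuniq m' ⟨hm', le_trans hpx hxm'⟩
      calc (x : L) ≤ m' := hxm'
        _ = m := by rw [e2, ← e1]
  rw [hrw]
  exact Set.Finite.isClosed_biUnion (hminfin.subset fun p hp => hp.1)
    fun p _ => (hZar _).2 ⟨p, rfl⟩

/-- The "fiber" `{x ∈ X | x ≤ m}` over a maximal element `m` is open. -/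
lemma fib_open {L : Type*} [CompleteLattice L] (X : Set L)
    [TopologicalSpace ↥X]
    (hZar : ∀ C : Set ↥X, IsClosed C ↔ ∃ a : L, C = {x : ↥X | a ≤ (x : L)})
    (hatomic : ∀ x ∈ X, ∃ m ∈ minimalsIn X, m ≤ x)
    (hminfin : (minimalsIn X).Finite) (hmaxfin : (maximalsIn X).Finite)
    (h2 : ∀ x ∈ X, ∃! m, m ∈ maximalsIn X ∧ x ≤ m)
    {m : L} (hm : m ∈ maximalsIn X) :
    IsOpen {x : ↥X | (x : L) ≤ m} := by
  rw [← isClosed_compl_iff]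
  have hrw : {x : ↥X | (x : L) ≤ m}ᶜ
      = ⋃ m' ∈ {m' ∈ maximalsIn X | m' ≠ m}, {x : ↥X | (x : L) ≤ m'} := by
    ext x
    simp only [Set.mem_compl_iff, Set.mem_setOf_eq, Set.mem_iUnion, exists_prop]
    constructor
    · intro hxm
      obtain ⟨M, ⟨hM, hxM⟩, _⟩ := h2 (↑x) x.2
      refine ⟨M, ⟨hM, ?_⟩, hxM⟩
      rintro rfl; exact hxm hxM
    · rintro ⟨m', ⟨hm', hne⟩, hxm'⟩ hxm
      obtain ⟨M, hM, hMuniq⟩ := h2 (↑x) x.2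
      exact hne ((hMuniq m' ⟨hm', hxm'⟩).trans (hMuniq m ⟨hm, hxm⟩).symm)
  rw [hrw]
  exact Set.Finite.isClosed_biUnion (hmaxfin.subset fun p hp => hp.1)
    fun m' hm' => fib_closed X hZar hatomic hminfin h2 hm'.1

/-- If `L` is an `X`-top complete lattice (`X` nonempty, `X ⊆ L \ {1}`, with the
Zariski-like topology whose closed sets are exactly the varieties
`V_X(a) = {x ∈ X | a ≤ x}`), `X` is coatomic and atomic with both `Min(X)` and
`Max(X)` finite, then the following are equivalent: `X` is normal, `X` has the
pm-property, and `Max(X)` is a retract of `X`. -/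
theorem stmt_4 {L : Type*} [CompleteLattice L] (X : Set L)
    (hne : X.Nonempty) (hXtop : ∀ x ∈ X, x ≠ ⊤)
    [TopologicalSpace ↥X]
    (hZar : ∀ C : Set ↥X, IsClosed C ↔ ∃ a : L, C = {x : ↥X | a ≤ (x : L)})
    (hcoatomic : ∀ x ∈ X, ∃ m ∈ maximalsIn X, x ≤ m)
    (hatomic : ∀ x ∈ X, ∃ m ∈ minimalsIn X, m ≤ x)
    (hminfin : (minimalsIn X).Finite) (hmaxfin : (maximalsIn X).Finite) :
    List.TFAE [NormalSpace ↥X,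
      ∀ x ∈ X, ∃! m, m ∈ maximalsIn X ∧ x ≤ m,
      ∃ r : ↥X → ↥{m : ↥X | (m : L) ∈ maximalsIn X},
        Continuous r ∧ ∀ m : ↥{m : ↥X | (m : L) ∈ maximalsIn X}, r ↑m = m] := by
  classical
  have closedV : ∀ a : L, IsClosed {x : ↥X | a ≤ (x : L)} := fun a => (hZar _).2 ⟨a, rfl⟩
  -- membership in closures of singletons
  have memcl : ∀ x y : ↥X, (x : L) ≤ (y : L) → y ∈ closure ({x} : Set ↥X) := by
    intro x y hxy
    obtain ⟨a, ha⟩ := (hZar _).1 (isClosed_closure (s := ({x} : Set ↥X)))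
    have hx : x ∈ closure ({x} : Set ↥X) := subset_closure rfl
    rw [ha] at hx ⊢
    exact le_trans hx hxy
  tfae_have 1 → 2 := by
    intro h1 x hx
    obtain ⟨m, hm, hxm⟩ := hcoatomic x hx
    refine ⟨m, ⟨hm, hxm⟩, ?_⟩
    rintro m' ⟨hm', hxm'⟩
    by_contra hne'
    have hclm : IsClosed ({⟨m, hm.1⟩} : Set ↥X) := by
      have : ({⟨m, hm.1⟩} : Set ↥X) = {y : ↥X | m ≤ (y : L)} := by
        ext y
        constructor
        · rintro rfl; exact le_refl m
        · intro hy; exact Subtype.ext (hm.2 ↑y y.2 hy)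
      rw [this]; exact closedV m
    have hclm' : IsClosed ({⟨m', hm'.1⟩} : Set ↥X) := by
      have : ({⟨m', hm'.1⟩} : Set ↥X) = {y : ↥X | m' ≤ (y : L)} := by
        ext y
        constructor
        · rintro rfl; exact le_refl m'
        · intro hy; exact Subtype.ext (hm'.2 ↑y y.2 hy)
      rw [this]; exact closedV m'
    have hd : Disjoint ({⟨m', hm'.1⟩} : Set ↥X) ({⟨m, hm.1⟩} : Set ↥X) := by
      rw [Set.disjoint_singleton]
      intro h
      exact hne' (congrArg Subtype.val h)
    obtain ⟨U, V, hU, hV, hsU, htV, hUV⟩ := h1.normal _ _ hclm' hclm hd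
    have hxU : (⟨x, hx⟩ : ↥X) ∈ U := by
      have hmc := memcl ⟨x, hx⟩ ⟨m', hm'.1⟩ hxm'
      obtain ⟨y, hyU, hy⟩ := mem_closure_iff.1 hmc U hU (hsU rfl)
      rw [Set.mem_singleton_iff] at hy
      rwa [← hy]
    have hxV : (⟨x, hx⟩ : ↥X) ∈ V := by
      have hmc := memcl ⟨x, hx⟩ ⟨m, hm.1⟩ hxm
      obtain ⟨y, hyV, hy⟩ := mem_closure_iff.1 hmc V hV (htV rfl)
      rw [Set.mem_singleton_iff] at hy
      rwa [← hy]
    exact Set.disjoint_left.1 hUV hxU hxV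
  tfae_have 2 → 3 := by
    intro h2
    refine ⟨fun x => ⟨⟨(h2 (↑x) x.2).choose, (h2 (↑x) x.2).choose_spec.1.1.1⟩,
      (h2 (↑x) x.2).choose_spec.1.1⟩, ?_, ?_⟩
    · rw [continuous_def]
      intro U hU
      have hrw : (fun x : ↥X => (⟨⟨(h2 (↑x) x.2).choose, (h2 (↑x) x.2).choose_spec.1.1.1⟩,
          (h2 (↑x) x.2).choose_spec.1.1⟩ : ↥{m : ↥X | (m : L) ∈ maximalsIn X})) ⁻¹' U
          = ⋃ m ∈ U, {x : ↥X | (x : L) ≤ ((m : ↥X) : L)} := by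
        ext x
        simp only [Set.mem_preimage, Set.mem_iUnion, Set.mem_setOf_eq, exists_prop]
        constructor
        · intro hx
          exact ⟨_, hx, (h2 (↑x) x.2).choose_spec.1.2⟩
        · rintro ⟨m, hmU, hxm⟩
          have he : ((m : ↥X) : L) = (h2 (↑x) x.2).choose :=
            (h2 (↑x) x.2).choose_spec.2 _ ⟨m.2, hxm⟩
          have : (⟨⟨(h2 (↑x) x.2).choose, (h2 (↑x) x.2).choose_spec.1.1.1⟩,
              (h2 (↑x) x.2).choose_spec.1.1⟩ : ↥{m : ↥X | (m : L) ∈ maximalsIn X}) = m := by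
            apply Subtype.ext; apply Subtype.ext; exact he.symm
          rwa [this]
      rw [hrw]
      exact isOpen_biUnion fun m _ =>
        fib_open X hZar hatomic hminfin hmaxfin h2 m.2
    · intro m
      apply Subtype.ext; apply Subtype.ext
      exact ((h2 (↑(↑m : ↥X)) (↑m : ↥X).2).choose_spec.2 _ ⟨m.2, le_refl _⟩).symm
  tfae_have 3 → 2 := by
    rintro ⟨r, hr, hfix⟩ x hx
    have key : ∀ n, n ∈ maximalsIn X → x ≤ n → n = ((↑(r ⟨x, hx⟩) : ↥X) : L) := by
      intro n hn hxn
      have h1 : (⟨n, hn.1⟩ : ↥X) ∈ closure ({⟨x, hx⟩} : Set ↥X) := memcl _ _ hxn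
      have h2' : r ⟨n, hn.1⟩ ∈ closure (r '' ({⟨x, hx⟩} : Set ↥X)) :=
        (image_closure_subset_closure_image hr) ⟨⟨n, hn.1⟩, h1, rfl⟩
      rw [Set.image_singleton] at h2'
      have hC : IsClosed {y : ↥{m : ↥X | (m : L) ∈ maximalsIn X} |
          ((↑(r ⟨x, hx⟩) : ↥X) : L) ≤ ((↑y : ↥X) : L)} :=
        IsClosed.preimage continuous_subtype_val (closedV _)
      have hsub : closure ({r ⟨x, hx⟩} : Set _) ⊆ {y | ((↑(r ⟨x, hx⟩) : ↥X) : L) ≤ ((↑y : ↥X) : L)} :=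
        closure_minimal (by rintro y rfl; exact le_refl _) hC
      have hle := hsub h2'
      have hfn : r ⟨n, hn.1⟩ = ⟨⟨n, hn.1⟩, hn⟩ := hfix ⟨⟨n, hn.1⟩, hn⟩
      rw [hfn] at hle
      exact (r ⟨x, hx⟩).2.2 n hn.1 hle
    obtain ⟨m, hm, hxm⟩ := hcoatomic x hx
    refine ⟨m, ⟨hm, hxm⟩, ?_⟩
    rintro m' ⟨hm', hxm'⟩
    rw [key m' hm' hxm', key m hm hxm]
  tfae_have 2 → 1 := by
    intro h2
    constructor
    intro s t hs ht hst
    obtain ⟨a, rfl⟩ := (hZar s).1 hs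
    obtain ⟨b, rfl⟩ := (hZar t).1 ht
    refine ⟨⋃ m ∈ {m ∈ maximalsIn X | ∃ x : ↥X, a ≤ (x : L) ∧ (x : L) ≤ m},
        {x : ↥X | (x : L) ≤ m},
      ⋃ m ∈ {m ∈ maximalsIn X | ∃ x : ↥X, b ≤ (x : L) ∧ (x : L) ≤ m},
        {x : ↥X | (x : L) ≤ m}, ?_, ?_, ?_, ?_, ?_⟩
    · exact isOpen_biUnion fun m hm =>
        fib_open X hZar hatomic hminfin hmaxfin h2 hm.1
    · exact isOpen_biUnion fun m hm =>
        fib_open X hZar hatomic hminfin hmaxfin h2 hm.1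
    · intro x hxa
      obtain ⟨m, ⟨hm, hxm⟩, _⟩ := h2 (↑x) x.2
      exact Set.mem_biUnion ⟨hm, x, hxa, hxm⟩ hxm
    · intro x hxb
      obtain ⟨m, ⟨hm, hxm⟩, _⟩ := h2 (↑x) x.2
      exact Set.mem_biUnion ⟨hm, x, hxb, hxm⟩ hxm
    · rw [Set.disjoint_left]
      intro z hz hz'
      simp only [Set.mem_iUnion, Set.mem_setOf_eq, exists_prop] at hz hz'
      obtain ⟨m, ⟨hm, x, hax, hxm⟩, hzm⟩ := hz
      obtain ⟨m', ⟨hm', y, hby, hym'⟩, hzm'⟩ := hz'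
      obtain ⟨M, hM, hMuniq⟩ := h2 (↑z) z.2
      have : m = m' := (hMuniq m ⟨hm, hzm⟩).trans (hMuniq m' ⟨hm', hzm'⟩).symm
      have hmem : (⟨m, hm.1⟩ : ↥X) ∈ {x : ↥X | a ≤ (x : L)} := le_trans hax hxm
      have hmem' : (⟨m, hm.1⟩ : ↥X) ∈ {x : ↥X | b ≤ (x : L)} :=
        le_trans hby (hym'.trans this.symm.le)
      exact Set.disjoint_left.1 hst hmem hmem'
  tfae_finish
end

section
/- Let L be a complete lattice that is an X-top lattice for some nonempty X ⊆ L \ {1}, and equip X with the Zariski-like topology. If X is finite, then the following are equivalent: (1) Max(X) is a retract of X; (2) X has the pm-property; (3) X is a normal topological space. -/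
section MaxAbove

variable {α : Type*} [PartialOrder α] (hpm : ∀ x : α, ∃! m, IsMax m ∧ x ≤ m)

noncomputable def maxAbove (x : α) : α := (hpm x).exists.choose

theorem isMax_maxAbove (x : α) : IsMax (maxAbove hpm x) := (hpm x).exists.choose_spec.1

theorem le_maxAbove (x : α) : x ≤ maxAbove hpm x := (hpm x).exists.choose_spec.2

theorem maxAbove_eq_of_isMax_of_le {x m : α} (hm : IsMax m) (hxm : x ≤ m) :
    maxAbove hpm x = m :=
  (hpm x).unique ⟨isMax_maxAbove hpm x, le_maxAbove hpm x⟩ ⟨hm, hxm⟩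

theorem maxAbove_eq_of_le {x y : α} (hxy : x ≤ y) : maxAbove hpm x = maxAbove hpm y :=
  maxAbove_eq_of_isMax_of_le hpm (isMax_maxAbove hpm y) (hxy.trans (le_maxAbove hpm y))

end MaxAbove

section LowerSetTopology

variable {α : Type*} [TopologicalSpace α]

section Preorder

variable [Preorder α] [Topology.IsLowerSet α]

theorem isOpen_preimage_of_forall_le_eq {β : Type*} {f : α → β}
    (hf : ∀ x y, x ≤ y → f x = f y) (s : Set β) : IsOpen (f ⁻¹' s) :=
  Topology.IsLowerSet.isOpen_iff_isLowerSet.2 fun x y hyx hx => by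
    rwa [Set.mem_preimage, hf y x hyx]

theorem continuous_of_forall_le_eq {β : Type*} [TopologicalSpace β] {f : α → β}
    (hf : ∀ x y, x ≤ y → f x = f y) : Continuous f :=
  continuous_def.2 fun s _ => isOpen_preimage_of_forall_le_eq hf s

theorem normalSpace_of_forall_le_eq (r : α → α) (hle : ∀ x, x ≤ r x)
    (hr : ∀ x y, x ≤ y → r x = r y) : NormalSpace α := by
  refine ⟨fun s t hs ht hst => ⟨r ⁻¹' s, r ⁻¹' t, isOpen_preimage_of_forall_le_eq hr s,
    isOpen_preimage_of_forall_le_eq hr t, ?_, ?_, hst.preimage r⟩⟩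
  · exact fun x hx => Topology.IsLowerSet.isClosed_iff_isUpper.1 hs (hle x) hx
  · exact fun x hx => Topology.IsLowerSet.isClosed_iff_isUpper.1 ht (hle x) hx

end Preorder

variable [PartialOrder α] [Topology.IsLowerSet α]

theorem IsMax.isClosed_singleton {m : α} (hm : IsMax m) : IsClosed {m} :=
  Topology.IsLowerSet.isClosed_iff_isUpper.2 fun _ _ hab ha => (hm.eq_of_le (ha ▸ hab)).symm

theorem eq_of_isMax_of_le_of_normalSpace [NormalSpace α] {x m m' : α} (hm : IsMax m)
    (hm' : IsMax m') (hxm : x ≤ m) (hxm' : x ≤ m') : m = m' := by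
  by_contra hne
  obtain ⟨U, V, hU, hV, hmU, hmV, hUV⟩ := normal_separation hm.isClosed_singleton
    hm'.isClosed_singleton (Set.disjoint_singleton.2 hne)
  exact hUV.ne_of_mem (Topology.IsLowerSet.isOpen_iff_isLowerSet.1 hU hxm (hmU rfl))
    (Topology.IsLowerSet.isOpen_iff_isLowerSet.1 hV hxm' (hmV rfl)) rfl

theorem coe_apply_eq_of_isMax_of_le {r : α → {m : α | IsMax m}} (hr : Continuous r)
    (hrm : ∀ m : {m : α | IsMax m}, r m = m) {x m : α} (hm : IsMax m) (hxm : x ≤ m) :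
    (r x : α) = m := by
  have : (r x : α) ⤳ m := by
    simpa [hrm ⟨m, hm⟩] using
      ((Topology.IsLowerSet.specializes_iff_le.2 hxm).map hr).map continuous_subtype_val
  exact (r x).2.eq_of_le (Topology.IsLowerSet.specializes_iff_le.1 this)

theorem tfae_exists_retraction_existsUnique_normalSpace [WellFoundedGT α] :
    List.TFAE [∃ r : α → {m : α | IsMax m}, Continuous r ∧ ∀ m : {m : α | IsMax m}, r m = m,
      ∀ x : α, ∃! m, IsMax m ∧ x ≤ m,
      NormalSpace α] := by
  have exists_isMax_ge (x : α) : ∃ m, IsMax m ∧ x ≤ m := by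
    obtain ⟨m, hxm, hm⟩ := exists_maximal_ge_of_wellFoundedGT (fun _ => True) x trivial
    exact ⟨m, maximal_true.1 hm, hxm⟩
  tfae_have 1 → 2 := by
    rintro ⟨r, hr, hrm⟩ x
    obtain ⟨m, hm, hxm⟩ := exists_isMax_ge x
    refine ⟨m, ⟨hm, hxm⟩, fun m' ⟨hm', hxm'⟩ => ?_⟩
    rw [← coe_apply_eq_of_isMax_of_le hr hrm hm hxm, coe_apply_eq_of_isMax_of_le hr hrm hm' hxm']
  tfae_have 2 → 1 := fun hpm =>
    ⟨fun x => ⟨maxAbove hpm x, isMax_maxAbove hpm x⟩,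
      continuous_of_forall_le_eq fun x y hxy => Subtype.ext (maxAbove_eq_of_le hpm hxy),
      fun m => Subtype.ext (maxAbove_eq_of_isMax_of_le hpm m.2 le_rfl)⟩
  tfae_have 2 → 3 := fun hpm =>
    normalSpace_of_forall_le_eq (maxAbove hpm) (le_maxAbove hpm) fun _ _ => maxAbove_eq_of_le hpm
  tfae_have 3 → 2 := fun _ x => by
    obtain ⟨m, hm, hxm⟩ := exists_isMax_ge x
    exact ⟨m, ⟨hm, hxm⟩, fun m' ⟨hm', hxm'⟩ => eq_of_isMax_of_le_of_normalSpace hm' hm hxm' hxm⟩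
  tfae_finish

end LowerSetTopology

theorem isLowerSet_of_isClosed_iff {L : Type*} [Preorder L] {X : Set L} [TopologicalSpace X]
    [Finite X] (hZar : ∀ C : Set X, IsClosed C ↔ ∃ a : L, C = {x : X | a ≤ (x : L)}) :
    Topology.IsLowerSet X := by
  have isClosed_iff_isUpperSet (C : Set X) : IsClosed C ↔ IsUpperSet C := by
    refine ⟨fun hC => ?_, fun hC => ?_⟩
    · obtain ⟨a, rfl⟩ := (hZar C).1 hC
      exact fun x y hxy hx => le_trans hx hxy
    · have hC_eq : C = ⋃ x ∈ C, {y : X | (x : L) ≤ y} :=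
        Set.ext fun y => ⟨fun hy => Set.mem_biUnion hy le_rfl, fun hy => by
          obtain ⟨x, hx, hxy⟩ := Set.mem_iUnion₂.1 hy
          exact hC hxy hx⟩
      rw [hC_eq]
      exact C.toFinite.isClosed_biUnion fun x _ => (hZar _).2 ⟨x, rfl⟩
  exact ⟨TopologicalSpace.ext_isClosed fun C => (isClosed_iff_isUpperSet C).trans
    (@Topology.IsLowerSet.isClosed_iff_isUpper _ _ (Topology.lowerSet X) _ _).symm⟩

section MaximalsIn

variable {L : Type*} [CompleteLattice L] {X : Set L}

theorem mem_maximalsIn_iff_isMax (x : X) : (x : L) ∈ maximalsIn X ↔ IsMax x :=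
  ⟨fun hx y hxy => (hx.2 y y.2 hxy).le,
    fun hx => ⟨x.2, fun y hy hxy => le_antisymm (hx (show x ≤ ⟨y, hy⟩ from hxy)) hxy⟩⟩

theorem existsUnique_mem_maximalsIn_iff (x : X) :
    (∃! m, m ∈ maximalsIn X ∧ (x : L) ≤ m) ↔ ∃! m : X, IsMax m ∧ x ≤ m := by
  constructor
  · rintro ⟨m, ⟨hm, hxm⟩, huniq⟩
    refine ⟨⟨m, hm.1⟩, ⟨(mem_maximalsIn_iff_isMax ⟨m, hm.1⟩).1 hm, hxm⟩, ?_⟩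
    exact fun m' ⟨hm', hxm'⟩ => Subtype.ext (huniq m' ⟨(mem_maximalsIn_iff_isMax m').2 hm', hxm'⟩)
  · rintro ⟨m, ⟨hm, hxm⟩, huniq⟩
    refine ⟨m, ⟨(mem_maximalsIn_iff_isMax m).2 hm, hxm⟩, fun m' ⟨hm', hxm'⟩ => ?_⟩
    exact congrArg Subtype.val
      (huniq ⟨m', hm'.1⟩ ⟨(mem_maximalsIn_iff_isMax ⟨m', hm'.1⟩).1 hm', hxm'⟩)

theorem forall_existsUnique_mem_maximalsIn_iff :
    (∀ x ∈ X, ∃! m, m ∈ maximalsIn X ∧ x ≤ m) ↔ ∀ x : X, ∃! m : X, IsMax m ∧ x ≤ m :=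
  ⟨fun h x => (existsUnique_mem_maximalsIn_iff x).1 (h x x.2),
    fun h x hx => (existsUnique_mem_maximalsIn_iff ⟨x, hx⟩).2 (h _)⟩

end MaximalsIn

theorem stmt_5_general {L : Type*} [CompleteLattice L] (X : Set L)
    [TopologicalSpace ↥X]
    (hZar : ∀ C : Set ↥X, IsClosed C ↔ ∃ a : L, C = {x : ↥X | a ≤ (x : L)})
    (hfin : X.Finite) :
    List.TFAE [∃ r : ↥X → ↥{m : ↥X | (m : L) ∈ maximalsIn X},
        Continuous r ∧ ∀ m : ↥{m : ↥X | (m : L) ∈ maximalsIn X}, r ↑m = m,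
      ∀ x ∈ X, ∃! m, m ∈ maximalsIn X ∧ x ≤ m,
      NormalSpace ↥X] := by
  have : Finite X := hfin.to_subtype
  have : Topology.IsLowerSet X := isLowerSet_of_isClosed_iff hZar
  have hMax : {m : X | (m : L) ∈ maximalsIn X} = {m | IsMax m} :=
    Set.ext mem_maximalsIn_iff_isMax
  rw [hMax, forall_existsUnique_mem_maximalsIn_iff]
  exact tfae_exists_retraction_existsUnique_normalSpace

/-- If `L` is an `X`-top complete lattice (`X` nonempty, `X ⊆ L \ {1}`, with the
Zariski-like topology whose closed sets are exactly the varieties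
`V_X(a) = {x ∈ X | a ≤ x}`) and `X` is finite, then the following are
equivalent: `Max(X)` is a retract of `X`, `X` has the pm-property, and `X` is a
normal space. -/
theorem stmt_5 {L : Type*} [CompleteLattice L] (X : Set L)
    (hne : X.Nonempty) (hXtop : ∀ x ∈ X, x ≠ ⊤)
    [TopologicalSpace ↥X]
    (hZar : ∀ C : Set ↥X, IsClosed C ↔ ∃ a : L, C = {x : ↥X | a ≤ (x : L)})
    (hfin : X.Finite) :
    List.TFAE [∃ r : ↥X → ↥{m : ↥X | (m : L) ∈ maximalsIn X},
        Continuous r ∧ ∀ m : ↥{m : ↥X | (m : L) ∈ maximalsIn X}, r ↑m = m,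
      ∀ x ∈ X, ∃! m, m ∈ maximalsIn X ∧ x ≤ m,
      NormalSpace ↥X] :=
  stmt_5_general X hZar hfin
end

section
/- Let L be a complete lattice that is an X-top lattice for some nonempty X ⊆ L \ {1}, and equip X with the Zariski-like topology. If X is local (i.e., X is coatomic and has exactly one maximal element), then X is ultraconnected, and hence X is a normal topological space. -/
/-- A topological space is ultraconnected if no two nonempty closed subsets are
disjoint. -/
def Ultraconnected (Y : Type*) [TopologicalSpace Y] : Prop :=
  ∀ C D : Set Y, IsClosed C → IsClosed D → C.Nonempty → D.Nonempty →
    (C ∩ D).Nonempty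

/-- If `L` is an `X`-top complete lattice (`X` nonempty, `X ⊆ L \ {1}`, with the
Zariski-like topology whose closed sets are exactly the varieties
`V_X(a) = {x ∈ X | a ≤ x}`) and `X` is local (coatomic with exactly one maximal
element), then `X` is ultraconnected and hence normal. -/
theorem stmt_6 {L : Type*} [CompleteLattice L] (X : Set L)
    (hne : X.Nonempty) (hXtop : ∀ x ∈ X, x ≠ ⊤)
    [TopologicalSpace ↥X]
    (hZar : ∀ C : Set ↥X, IsClosed C ↔ ∃ a : L, C = {x : ↥X | a ≤ (x : L)})
    (hcoatomic : ∀ x ∈ X, ∃ m ∈ maximalsIn X, x ≤ m)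
    (hunique : ∃! m, m ∈ maximalsIn X) :
    Ultraconnected ↥X ∧ NormalSpace ↥X := by
  obtain ⟨m, hm, hmu⟩ := hunique
  have key : ∀ x ∈ X, x ≤ m := by
    intro x hx
    obtain ⟨m', hm', hle⟩ := hcoatomic x hx
    rw [hmu m' hm'] at hle; exact hle
  have hultra : Ultraconnected ↥X := by
    intro C D hC hD hCne hDne
    obtain ⟨a, rfl⟩ := (hZar C).mp hC
    obtain ⟨b, rfl⟩ := (hZar D).mp hD
    obtain ⟨⟨x, hx⟩, hax⟩ := hCne
    obtain ⟨⟨y, hy⟩, hby⟩ := hDne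
    exact ⟨⟨m, hm.1⟩, le_trans hax (key x hx), le_trans hby (key y hy)⟩
  refine ⟨hultra, ⟨fun s t hs ht hd => ?_⟩⟩
  rcases s.eq_empty_or_nonempty with rfl | hsne
  · exact SeparatedNhds.empty_left t
  rcases t.eq_empty_or_nonempty with rfl | htne
  · exact SeparatedNhds.empty_right s
  exact absurd (hultra s t hs ht hsne htne)
    (by rwa [Set.not_nonempty_iff_eq_empty, ← Set.disjoint_iff_inter_eq_empty])
end

section
/- Let L be a complete lattice that is an X-top lattice for some nonempty X ⊆ L \ {1}, and equip X with the Zariski-like topology. If X is colocal (i.e., X is atomic and has exactly one minimal element) and X is a normal topological space, then X has at most one maximal element; if moreover X is coatomic, then X is local. -/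
/-- If `L` is an `X`-top complete lattice (`X` nonempty, `X ⊆ L \ {1}`, with the
Zariski-like topology whose closed sets are exactly the varieties
`V_X(a) = {x ∈ X | a ≤ x}`), `X` is colocal (atomic with exactly one minimal
element) and `X` is normal, then `X` has at most one maximal element; if
moreover `X` is coatomic, then `X` is local (coatomic with exactly one maximal
element). -/
theorem stmt_7 {L : Type*} [CompleteLattice L] (X : Set L)
    (hne : X.Nonempty) (hXtop : ∀ x ∈ X, x ≠ ⊤)
    [TopologicalSpace ↥X]
    (hZar : ∀ C : Set ↥X, IsClosed C ↔ ∃ a : L, C = {x : ↥X | a ≤ (x : L)})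
    (hatomic : ∀ x ∈ X, ∃ m ∈ minimalsIn X, m ≤ x)
    (hmin : ∃! m, m ∈ minimalsIn X)
    (hnormal : NormalSpace ↥X) :
    (∀ m ∈ maximalsIn X, ∀ m' ∈ maximalsIn X, m = m') ∧
      ((∀ x ∈ X, ∃ m ∈ maximalsIn X, x ≤ m) →
        (∀ x ∈ X, ∃ m ∈ maximalsIn X, x ≤ m) ∧ ∃! m, m ∈ maximalsIn X) := by
  obtain ⟨m0, hm0, hm0uniq⟩ := hmin
  have hle : ∀ x ∈ X, m0 ≤ x := by
    intro x hx
    obtain ⟨m', hm', hle'⟩ := hatomic x hx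
    rw [hm0uniq m' hm'] at hle'
    exact hle'
  have key : ∀ m ∈ maximalsIn X, ∀ m' ∈ maximalsIn X, m = m' := by
    intro m1 hm1 m2 hm2
    by_contra hne12
    have hsingle : ∀ m : L, ∀ hm : m ∈ maximalsIn X,
        ({x : ↥X | m ≤ (x : L)} : Set ↥X) = {⟨m, hm.1⟩} := by
      intro m hm
      ext x
      simp only [Set.mem_setOf_eq, Set.mem_singleton_iff, Subtype.ext_iff]
      constructor
      · intro h; exact hm.2 x.1 x.2 h
      · intro h; rw [h]
    have hc1 : IsClosed ({(⟨m1, hm1.1⟩ : ↥X)} : Set ↥X) := by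
      rw [hZar]; exact ⟨m1, (hsingle m1 hm1).symm⟩
    have hc2 : IsClosed ({(⟨m2, hm2.1⟩ : ↥X)} : Set ↥X) := by
      rw [hZar]; exact ⟨m2, (hsingle m2 hm2).symm⟩
    have hdisj : Disjoint ({(⟨m1, hm1.1⟩ : ↥X)} : Set ↥X) {(⟨m2, hm2.1⟩ : ↥X)} := by
      rw [Set.disjoint_singleton]
      intro h
      exact hne12 (congrArg Subtype.val h)
    obtain ⟨U, V, hUo, hVo, hsU, hsV, hUV⟩ := hnormal.normal _ _ hc1 hc2 hdisj
    have hm1U : (⟨m1, hm1.1⟩ : ↥X) ∈ U := hsU rfl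
    have hm2V : (⟨m2, hm2.1⟩ : ↥X) ∈ V := hsV rfl
    have hm0mem : ∀ (W : Set ↥X), IsOpen W → W.Nonempty → (⟨m0, hm0.1⟩ : ↥X) ∈ W := by
      intro W hWo ⟨w, hw⟩
      obtain ⟨a, ha⟩ := (hZar Wᶜ).1 (isClosed_compl_iff.2 hWo)
      by_cases hale : a ≤ m0
      · exfalso
        have : w ∈ Wᶜ := by
          rw [ha]; exact le_trans hale (hle w.1 w.2)
        exact this hw
      · by_contra hmem
        exact hale (by have : (⟨m0, hm0.1⟩ : ↥X) ∈ Wᶜ := hmem; rwa [ha] at this)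
    have h1 := hm0mem U hUo ⟨_, hm1U⟩
    have h2 := hm0mem V hVo ⟨_, hm2V⟩
    exact (Set.disjoint_left.1 hUV) h1 h2
  refine ⟨key, fun hco => ⟨hco, ?_⟩⟩
  obtain ⟨x, hx⟩ := hne
  obtain ⟨m, hm, -⟩ := hco x hx
  exact ⟨m, hm, fun y hy => key y hy m hm⟩
end

section
/- Let L be a complete lattice that is an X-top lattice for some nonempty X ⊆ L \ {1}, and equip X with the Zariski-like topology. If X is colocal and coatomic, then the following are equivalent: (1) X is local; (2) X is ultraconnected; (3) X is a normal topological space. -/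
/-- If `L` is an `X`-top complete lattice (`X` nonempty, `X ⊆ L \ {1}`, with the
Zariski-like topology whose closed sets are exactly the varieties
`V_X(a) = {x ∈ X | a ≤ x}`) and `X` is colocal and coatomic, then the following
are equivalent: `X` is local, `X` is ultraconnected, and `X` is normal. -/
theorem stmt_8 {L : Type*} [CompleteLattice L] (X : Set L)
    (hne : X.Nonempty) (hXtop : ∀ x ∈ X, x ≠ ⊤)
    [TopologicalSpace ↥X]
    (hZar : ∀ C : Set ↥X, IsClosed C ↔ ∃ a : L, C = {x : ↥X | a ≤ (x : L)})
    (hatomic : ∀ x ∈ X, ∃ m ∈ minimalsIn X, m ≤ x)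
    (hmin : ∃! m, m ∈ minimalsIn X)
    (hcoatomic : ∀ x ∈ X, ∃ m ∈ maximalsIn X, x ≤ m) :
    List.TFAE [(∀ x ∈ X, ∃ m ∈ maximalsIn X, x ≤ m) ∧ (∃! m, m ∈ maximalsIn X),
      Ultraconnected ↥X,
      NormalSpace ↥X] := by
  -- the unique minimal element is below every element of X
  obtain ⟨m₀, hm₀, hm₀u⟩ := hmin
  have hm₀le : ∀ x ∈ X, m₀ ≤ x := by
    intro x hx
    obtain ⟨m, hm, hmx⟩ := hatomic x hx
    exact (hm₀u m hm) ▸ hmx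
  tfae_have 1 → 2 := by
    rintro ⟨-, M, hM, hMu⟩ C D hC hD ⟨c, hc⟩ ⟨d, hd⟩
    obtain ⟨a, rfl⟩ := (hZar C).1 hC
    obtain ⟨b, rfl⟩ := (hZar D).1 hD
    refine ⟨⟨M, hM.1⟩, ?_, ?_⟩
    · obtain ⟨m, hm, hcm⟩ := hcoatomic (c : L) c.2
      exact le_trans hc (hMu m hm ▸ hcm)
    · obtain ⟨m, hm, hdm⟩ := hcoatomic (d : L) d.2
      exact le_trans hd (hMu m hm ▸ hdm)
  tfae_have 2 → 3 := by
    intro hU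
    refine ⟨fun s t hs ht hdisj => ?_⟩
    rcases s.eq_empty_or_nonempty with rfl | hsne
    · exact SeparatedNhds.empty_left t
    rcases t.eq_empty_or_nonempty with rfl | htne
    · exact SeparatedNhds.empty_right s
    exact absurd (hU s t hs ht hsne htne) (Set.not_nonempty_iff_eq_empty.2 hdisj.inter_eq)
  tfae_have 3 → 1 := by
    intro hN
    refine ⟨hcoatomic, ?_⟩
    obtain ⟨x, hx⟩ := hne
    obtain ⟨M, hM, -⟩ := hcoatomic x hx
    refine ⟨M, hM, fun M' hM' => ?_⟩
    by_contra hne'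
    -- singletons of maximal elements are closed
    have hsing : ∀ (N : L) (hN : N ∈ maximalsIn X), ({⟨N, hN.1⟩} : Set ↥X)
        = {x : ↥X | N ≤ (x : L)} := by
      intro N hN
      ext y
      simp only [Set.mem_singleton_iff, Set.mem_setOf_eq]
      constructor
      · rintro rfl; rfl
      · intro h
        exact Subtype.ext (hN.2 y y.2 h)
    have hc1 : IsClosed ({⟨M', hM'.1⟩} : Set ↥X) := (hZar _).2 ⟨M', hsing M' hM'⟩
    have hc2 : IsClosed ({⟨M, hM.1⟩} : Set ↥X) := (hZar _).2 ⟨M, hsing M hM⟩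
    have hdisj : Disjoint ({⟨M', hM'.1⟩} : Set ↥X) {⟨M, hM.1⟩} := by
      simp only [Set.disjoint_singleton]
      exact fun h => hne' (congrArg Subtype.val h)
    obtain ⟨U, V, hUo, hVo, hsU, htV, hUV⟩ := hN.normal _ _ hc1 hc2 hdisj
    obtain ⟨a, ha⟩ := (hZar Uᶜ).1 hUo.isClosed_compl
    obtain ⟨b, hb⟩ := (hZar Vᶜ).1 hVo.isClosed_compl
    have hM'U : (⟨M', hM'.1⟩ : ↥X) ∈ U := hsU rfl
    have hMV : (⟨M, hM.1⟩ : ↥X) ∈ V := htV rfl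
    -- the point m₀
    have hm₀X : (⟨m₀, hm₀.1⟩ : ↥X) ∈ Uᶜ ∪ Vᶜ := by
      rw [← Set.compl_inter, hUV.inter_eq]
      simp
    rcases hm₀X with h | h
    · rw [ha] at h
      have : (⟨M', hM'.1⟩ : ↥X) ∈ Uᶜ := by
        rw [ha]; exact le_trans h (hm₀le M' hM'.1)
      exact this hM'U
    · rw [hb] at h
      have : (⟨M, hM.1⟩ : ↥X) ∈ Vᶜ := by
        rw [hb]; exact le_trans h (hm₀le M hM.1)
      exact this hMV
  tfae_finish
end

section
/- Let L be a complete lattice that is an X-top lattice for some nonempty X ⊆ L \ {1}, and equip X with the Zariski-like topology. If X is perfectly normal, then X contains no two-element chain; that is, there are no x, y ∈ X with x < y (equivalently, the Krull dimension of X is 0). -/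
/-- If `L` is an `X`-top complete lattice (`X` nonempty, `X ⊆ L \ {1}`, with the
Zariski-like topology whose closed sets are exactly the varieties
`V_X(a) = {x ∈ X | a ≤ x}`) and `X` is perfectly normal (normal and every closed
set is a `Gδ`-set), then `X` contains no two-element chain. -/
theorem stmt_12 {L : Type*} [CompleteLattice L] (X : Set L)
    (hne : X.Nonempty) (hXtop : ∀ x ∈ X, x ≠ ⊤)
    [TopologicalSpace ↥X]
    (hZar : ∀ C : Set ↥X, IsClosed C ↔ ∃ a : L, C = {x : ↥X | a ≤ (x : L)})
    (hnormal : NormalSpace ↥X)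
    (hGdelta : ∀ C : Set ↥X, IsClosed C → IsGδ C) :
    ∀ x y : ↥X, ¬ x < y := by
  intro x y hxy
  set C : Set ↥X := {z : ↥X | (y : L) ≤ (z : L)} with hCdef
  have hclosed : IsClosed C := (hZar C).mpr ⟨(y : L), rfl⟩
  obtain ⟨T, hTopen, -, hTeq⟩ := hGdelta C hclosed
  have hyC : y ∈ C := le_refl _
  have hxC : x ∉ C := fun h => hxy.not_ge (Subtype.coe_le_coe.mp h)
  rw [hTeq] at hxC hyC
  obtain ⟨U, hUT, hxU⟩ : ∃ U ∈ T, x ∉ U := by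
    by_contra h
    push_neg at h
    exact hxC (fun U hU => h U hU)
  obtain ⟨a, ha⟩ := (hZar Uᶜ).mp (hTopen U hUT).isClosed_compl
  have hax : a ≤ (x : L) := by
    have : x ∈ Uᶜ := hxU
    rw [ha] at this
    exact this
  have hyUc : y ∈ Uᶜ := by
    rw [ha]
    exact hax.trans hxy.le
  exact hyUc (hyC U hUT)
end

section
/- Let L be a complete lattice that is an X-top lattice for some nonempty X ⊆ L \ {1}, and equip X with the Zariski-like topology. If X is perfectly normal, then X is a T1 space; consequently, X is perfectly normal if and only if X is T6 (T1 and perfectly normal). -/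
/-- If `L` is an `X`-top complete lattice (`X` nonempty, `X ⊆ L \ {1}`, with the
Zariski-like topology whose closed sets are exactly the varieties
`V_X(a) = {x ∈ X | a ≤ x}`), then: if `X` is perfectly normal (normal and every
closed set is a `Gδ`-set) then `X` is `T1`; consequently, `X` is perfectly
normal if and only if `X` is `T6` (`T1` and perfectly normal). -/
theorem stmt_13 {L : Type*} [CompleteLattice L] (X : Set L)
    (hne : X.Nonempty) (hXtop : ∀ x ∈ X, x ≠ ⊤)
    [TopologicalSpace ↥X]
    (hZar : ∀ C : Set ↥X, IsClosed C ↔ ∃ a : L, C = {x : ↥X | a ≤ (x : L)}) :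
    ((NormalSpace ↥X ∧ ∀ C : Set ↥X, IsClosed C → IsGδ C) → T1Space ↥X) ∧
      ((NormalSpace ↥X ∧ ∀ C : Set ↥X, IsClosed C → IsGδ C) ↔
        (T1Space ↥X ∧ NormalSpace ↥X ∧ ∀ C : Set ↥X, IsClosed C → IsGδ C)) := by
  have main : (NormalSpace ↥X ∧ ∀ C : Set ↥X, IsClosed C → IsGδ C) → T1Space ↥X := by
    rintro ⟨-, hGδ⟩
    -- Key: if `x ≤ y` in `X` then `x = y`.
    have key : ∀ x y : ↥X, (x : L) ≤ (y : L) → x = y := by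
      intro x y hxy
      have hC : IsClosed {z : ↥X | (y : L) ≤ (z : L)} := (hZar _).2 ⟨(y : L), rfl⟩
      obtain ⟨T, hTo, -, hT⟩ := hGδ _ hC
      have hyT : y ∈ ⋂₀ T := by rw [← hT]; exact le_refl _
      have hxC : x ∈ {z : ↥X | (y : L) ≤ (z : L)} := by
        rw [hT]
        intro t ht
        by_contra hx
        obtain ⟨a, ha⟩ := (hZar tᶜ).1 (by simpa using (hTo t ht).isClosed_compl)
        have hax : x ∈ tᶜ := hx
        rw [ha] at hax
        have : y ∈ tᶜ := by rw [ha]; exact le_trans hax hxy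
        exact this (hyT t ht)
      exact Subtype.ext (le_antisymm hxy hxC)
    constructor
    intro x
    have : ({x} : Set ↥X) = {z : ↥X | (x : L) ≤ (z : L)} := by
      ext z
      constructor
      · rintro rfl; exact le_refl _
      · intro hz; exact (key x z hz).symm
    rw [this]
    exact (hZar _).2 ⟨(x : L), rfl⟩
  refine ⟨main, ⟨fun h => ⟨main h, h⟩, fun h => h.2⟩⟩
end

section
/- Let L be a complete lattice that is an X-top lattice for some nonempty X ⊆ L \ {1}, and equip X with the Zariski-like topology. If X is a regular topological space, then there are no x, y ∈ X with x < y (the Krull dimension of X is 0); in particular X is T1, and hence X is regular if and only if X is T3 (regular and T1). -/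
/-- If `L` is an `X`-top complete lattice (`X` nonempty, `X ⊆ L \ {1}`, with the
Zariski-like topology whose closed sets are exactly the varieties
`V_X(a) = {x ∈ X | a ≤ x}`), then: if `X` is regular then `X` contains no
two-element chain and `X` is `T1`; hence `X` is regular if and only if `X` is
`T3` (regular and `T1`). -/
theorem stmt_14 {L : Type*} [CompleteLattice L] (X : Set L)
    (hne : X.Nonempty) (hXtop : ∀ x ∈ X, x ≠ ⊤)
    [TopologicalSpace ↥X]
    (hZar : ∀ C : Set ↥X, IsClosed C ↔ ∃ a : L, C = {x : ↥X | a ≤ (x : L)}) :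
    (RegularSpace ↥X → (∀ x y : ↥X, ¬ x < y) ∧ T1Space ↥X) ∧
      (RegularSpace ↥X ↔ (RegularSpace ↥X ∧ T1Space ↥X)) := by
  have hclos : ∀ y z : ↥X, z ∈ closure {y} ↔ (y : L) ≤ (z : L) := by
    intro y z
    constructor
    · intro hz
      have hcl : IsClosed {x : ↥X | (y : L) ≤ (x : L)} :=
        (hZar _).2 ⟨(y : L), rfl⟩
      have := closure_minimal (by simp : ({y} : Set ↥X) ⊆ {x : ↥X | (y : L) ≤ (x : L)}) hcl
      exact this hz
    · intro hyz
      obtain ⟨a, ha⟩ := (hZar (closure {y})).1 isClosed_closure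
      have hy : y ∈ closure ({y} : Set ↥X) := subset_closure rfl
      rw [ha] at hy ⊢
      exact le_trans hy hyz
  have key : RegularSpace ↥X → (∀ x y : ↥X, ¬ x < y) ∧ T1Space ↥X := by
    intro hreg
    haveI := hreg
    have hspec : ∀ x y : ↥X, x ⤳ y → (y : L) ≤ (x : L) ∧ (x : L) ≤ (y : L) := by
      intro x y h
      have h1 : (x : L) ≤ (y : L) := (hclos x y).1 (specializes_iff_mem_closure.1 h)
      have h2 : y ⤳ x := (h.inseparable).symm.specializes
      exact ⟨(hclos y x).1 (specializes_iff_mem_closure.1 h2), h1⟩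
    constructor
    · intro x y hxy
      have hyx : x ⤳ y := specializes_iff_mem_closure.2 ((hclos x y).2 hxy.le)
      obtain ⟨h1, h2⟩ := hspec x y hyx
      exact absurd (le_antisymm h1 h2) (Subtype.coe_ne_coe.2 hxy.ne')
    · refine t1Space_iff_specializes_imp_eq.2 fun x y h => ?_
      obtain ⟨h1, h2⟩ := hspec x y h
      exact Subtype.ext (le_antisymm h2 h1)
  exact ⟨key, ⟨fun h => ⟨h, (key h).2⟩, fun h => h.1⟩⟩
end

section
/- Let L be a complete lattice that is an X-top lattice for some nonempty X ⊆ L \ {1}, and equip X with the Zariski-like topology. If X is compact, then the following are equivalent: (1) X is regular; (2) X is T3 (regular and T1); (3) X is Hausdorff (T2); (4) X is T4 (normal and T1). -/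
/-- If `L` is an `X`-top complete lattice (`X` nonempty, `X ⊆ L \ {1}`, with the
Zariski-like topology whose closed sets are exactly the varieties
`V_X(a) = {x ∈ X | a ≤ x}`) and `X` is compact, then the following are
equivalent: `X` is regular; `X` is `T3` (regular and `T1`); `X` is Hausdorff;
`X` is `T4` (normal and `T1`). -/
theorem stmt_15 {L : Type*} [CompleteLattice L] (X : Set L)
    (hne : X.Nonempty) (hXtop : ∀ x ∈ X, x ≠ ⊤)
    [TopologicalSpace ↥X]
    (hZar : ∀ C : Set ↥X, IsClosed C ↔ ∃ a : L, C = {x : ↥X | a ≤ (x : L)})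
    (hcpt : CompactSpace ↥X) :
    List.TFAE [RegularSpace ↥X,
      RegularSpace ↥X ∧ T1Space ↥X,
      T2Space ↥X,
      NormalSpace ↥X ∧ T1Space ↥X] := by
  -- key: any point's closure is contained in its variety
  have hVclosed : ∀ y : ↥X, IsClosed {x : ↥X | (y : L) ≤ (x : L)} := by
    intro y
    exact (hZar _).2 ⟨(y : L), rfl⟩
  have hclos : ∀ x y : ↥X, y ∈ closure ({x} : Set ↥X) → (x : L) ≤ (y : L) := by
    intro x y hy
    have : closure ({x} : Set ↥X) ⊆ {z : ↥X | (x : L) ≤ (z : L)} :=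
      closure_minimal (by simp) (hVclosed x)
    exact this hy
  tfae_have 1 → 2 := by
    intro hreg
    refine ⟨hreg, ?_⟩
    constructor
    intro x
    have h : closure ({x} : Set ↥X) = {x} := by
      apply Set.Subset.antisymm _ subset_closure
      intro y hy
      have h1 : (x : L) ≤ (y : L) := hclos x y hy
      have hspec : x ⤳ y := specializes_iff_mem_closure.2 hy
      have hspec' : y ⤳ x := hspec.symm
      have h2 : (y : L) ≤ (x : L) := hclos y x (specializes_iff_mem_closure.1 hspec')
      have : (x : L) = (y : L) := le_antisymm h1 h2
      simp [Subtype.ext this.symm]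
    rw [← h]
    exact isClosed_closure
  tfae_have 2 → 3 := by
    rintro ⟨hreg, ht1⟩
    exact inferInstance
  tfae_have 3 → 4 := by
    intro ht2
    exact ⟨inferInstance, inferInstance⟩
  tfae_have 4 → 1 := by
    rintro ⟨hnorm, ht1⟩
    haveI : T4Space ↥X := ⟨⟩
    exact inferInstance
  tfae_finish
end

section
/- Let L be a complete lattice that is an X-top lattice for some nonempty X ⊆ L \ {1}, and equip X with the Zariski-like topology. If X is compact and coatomic, then X is Hausdorff (T2) if and only if X is a normal topological space and X is Jacobson (every x ∈ X equals the infimum in L of the set of maximal elements of X lying above x). -/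
/-- If `L` is an `X`-top complete lattice (`X` nonempty, `X ⊆ L \ {1}`, with the
Zariski-like topology whose closed sets are exactly the varieties
`V_X(a) = {x ∈ X | a ≤ x}`) and `X` is compact and coatomic, then `X` is
Hausdorff if and only if `X` is normal and Jacobson (every `x ∈ X` is the
infimum in `L` of the maximal elements of `X` above it). -/
theorem stmt_16 {L : Type*} [CompleteLattice L] (X : Set L)
    (hne : X.Nonempty) (hXtop : ∀ x ∈ X, x ≠ ⊤)
    [TopologicalSpace ↥X]
    (hZar : ∀ C : Set ↥X, IsClosed C ↔ ∃ a : L, C = {x : ↥X | a ≤ (x : L)})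
    (hcpt : CompactSpace ↥X)
    (hcoatomic : ∀ x ∈ X, ∃ m ∈ maximalsIn X, x ≤ m) :
    T2Space ↥X ↔
      (NormalSpace ↥X ∧ ∀ x ∈ X, x = sInf {m | m ∈ maximalsIn X ∧ x ≤ m}) := by
  constructor
  · intro hT2
    refine ⟨inferInstance, ?_⟩
    intro x hx
    have hmax : ∀ y ∈ X, x ≤ y → y = x := by
      intro y hy hxy
      have hcl : closure ({(⟨x, hx⟩ : ↥X)} : Set ↥X) = {⟨x, hx⟩} := closure_singleton
      obtain ⟨a, ha⟩ := (hZar (closure ({(⟨x, hx⟩ : ↥X)} : Set ↥X))).1 isClosed_closure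
      have hax : a ≤ x := by
        have hmem : (⟨x, hx⟩ : ↥X) ∈ closure ({(⟨x, hx⟩ : ↥X)} : Set ↥X) :=
          subset_closure rfl
        rw [ha] at hmem; exact hmem
      have hyc : (⟨y, hy⟩ : ↥X) ∈ closure ({(⟨x, hx⟩ : ↥X)} : Set ↥X) := by
        rw [ha]; exact hax.trans hxy
      rw [hcl] at hyc
      exact congrArg Subtype.val hyc
    have hset : {m | m ∈ maximalsIn X ∧ x ≤ m} = {x} := by
      ext m
      constructor
      · rintro ⟨⟨hm, _⟩, hxm⟩; exact hmax m hm hxm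
      · rintro rfl; exact ⟨⟨hx, hmax⟩, le_rfl⟩
    rw [hset, sInf_singleton]
  · rintro ⟨hnorm, hjac⟩
    have hmax : ∀ x ∈ X, ∀ y ∈ X, x ≤ y → y = x := by
      intro x hx y hy hxy
      by_contra hne'
      obtain ⟨m1, hm1, hym1⟩ := hcoatomic y hy
      have hxm1 : x ≤ m1 := hxy.trans hym1
      have hxnem1 : x ≠ m1 := by
        rintro rfl
        exact hne' (le_antisymm hym1 hxy)
      obtain ⟨m2, hm2, hxm2, hm21⟩ : ∃ m2, m2 ∈ maximalsIn X ∧ x ≤ m2 ∧ m2 ≠ m1 := by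
        by_contra h
        push_neg at h
        have hs : {m | m ∈ maximalsIn X ∧ x ≤ m} = {m1} := by
          ext m
          constructor
          · rintro ⟨hm, hxm⟩; exact h m hm hxm
          · rintro rfl; exact ⟨hm1, hxm1⟩
        have := hjac x hx
        rw [hs, sInf_singleton] at this
        exact hxnem1 this
      have hm1X : m1 ∈ X := hm1.1
      have hm2X : m2 ∈ X := hm2.1
      have hs1 : ({(⟨m1, hm1X⟩ : ↥X)} : Set ↥X) = {z : ↥X | m1 ≤ (z : L)} := by
        ext z
        constructor
        · rintro rfl; exact le_rfl
        · intro hz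
          have := hm1.2 z.1 z.2 hz
          exact Subtype.ext this.symm |>.symm
      have hs2 : ({(⟨m2, hm2X⟩ : ↥X)} : Set ↥X) = {z : ↥X | m2 ≤ (z : L)} := by
        ext z
        constructor
        · rintro rfl; exact le_rfl
        · intro hz
          have := hm2.2 z.1 z.2 hz
          exact Subtype.ext this.symm |>.symm
      have hcl1 : IsClosed ({(⟨m1, hm1X⟩ : ↥X)} : Set ↥X) := (hZar _).2 ⟨m1, hs1⟩
      have hcl2 : IsClosed ({(⟨m2, hm2X⟩ : ↥X)} : Set ↥X) := (hZar _).2 ⟨m2, hs2⟩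
      have hdisj : Disjoint ({(⟨m1, hm1X⟩ : ↥X)} : Set ↥X) {(⟨m2, hm2X⟩ : ↥X)} := by
        simp only [Set.disjoint_singleton]
        intro h
        exact hm21 (congrArg Subtype.val h).symm
      obtain ⟨U, V, hU, hV, hsU, hsV, hUV⟩ := hnorm.normal _ _ hcl1 hcl2 hdisj
      obtain ⟨a1, ha1⟩ := (hZar Uᶜ).1 hU.isClosed_compl
      obtain ⟨a2, ha2⟩ := (hZar Vᶜ).1 hV.isClosed_compl
      have hcover : (⟨x, hx⟩ : ↥X) ∈ Uᶜ ∪ Vᶜ := by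
        rw [← Set.compl_inter]
        intro hmem
        exact (Set.disjoint_iff.1 hUV hmem).elim
      rcases hcover with hc | hc
      · rw [ha1] at hc
        have : (⟨m1, hm1X⟩ : ↥X) ∈ Uᶜ := by
          rw [ha1]; exact le_trans hc hxm1
        exact this (hsU rfl)
      · rw [ha2] at hc
        have : (⟨m2, hm2X⟩ : ↥X) ∈ Vᶜ := by
          rw [ha2]; exact le_trans hc hxm2
        exact this (hsV rfl)
    haveI : T1Space ↥X := by
      refine ⟨fun z => (hZar _).2 ⟨z.1, ?_⟩⟩
      ext w
      constructor
      · rintro rfl; exact le_rfl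
      · intro hw
        exact Subtype.ext (hmax z.1 z.2 w.1 w.2 hw)
    haveI := hnorm
    haveI : T4Space ↥X := ⟨⟩
    infer_instance
end

section
/- Let L be a complete lattice that is an X-top lattice for some nonempty X ⊆ L \ {1}, and equip X with the Zariski-like topology. If X is completely normal (every subspace of X is normal), then X does not contain a ∨-tree 𝒱 with finite cover such that 𝒱 has at least two maximal elements. In particular, there are no elements m, y, z ∈ X with y and z incomparable and m < y, m < z. -/
/-- A `∨`-tree in a poset: a nonempty subset `T` such that any two incomparable
elements of `T` have a common strict lower bound in `T`, and any two elements of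
`T` strictly below a common element of `T` are comparable. -/
def IsVeeTree {α : Type*} [PartialOrder α] (T : Set α) : Prop :=
  T.Nonempty ∧
    (∀ x ∈ T, ∀ y ∈ T, ¬ x ≤ y → ¬ y ≤ x → ∃ z ∈ T, z < x ∧ z < y) ∧
    (∀ x ∈ T, ∀ y ∈ T, ∀ z ∈ T, y < x → z < x → (y ≤ z ∨ z ≤ y))

/-- The set of maximal elements of a subset `T` of a poset. -/
def maxOf {α : Type*} [PartialOrder α] (T : Set α) : Set α :=
  {m | m ∈ T ∧ ∀ y ∈ T, m ≤ y → y = m}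

/-- If `L` is an `X`-top complete lattice (`X` nonempty, `X ⊆ L \ {1}`, with the
Zariski-like topology whose closed sets are exactly the varieties
`V_X(a) = {x ∈ X | a ≤ x}`) and `X` is completely normal (every subspace is
normal), then `X` contains no `∨`-tree with finite cover having at least two
maximal elements; in particular there are no `m, y, z ∈ X` with `y` and `z`
incomparable and `m < y`, `m < z`. -/
theorem stmt_17 {L : Type*} [CompleteLattice L] (X : Set L)
    (hne : X.Nonempty) (hXtop : ∀ x ∈ X, x ≠ ⊤)
    [TopologicalSpace ↥X]
    (hZar : ∀ C : Set ↥X, IsClosed C ↔ ∃ a : L, C = {x : ↥X | a ≤ (x : L)})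
    (hCN : ∀ s : Set ↥X, NormalSpace ↥s) :
    (¬ ∃ T : Set ↥X, IsVeeTree T ∧ (maxOf T).Finite ∧
        ∃ y ∈ maxOf T, ∃ z ∈ maxOf T, y ≠ z) ∧
      ¬ ∃ m y z : ↥X, m < y ∧ m < z ∧ ¬ y ≤ z ∧ ¬ z ≤ y := by
  have key : ¬ ∃ m y z : ↥X, m < y ∧ m < z ∧ ¬ y ≤ z ∧ ¬ z ≤ y := by
    rintro ⟨m, y, z, hmy, hmz, hyz, hzy⟩
    set s : Set ↥X := {m, y, z} with hs
    have hm : m ∈ s := by simp [hs]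
    have hy : y ∈ s := by simp [hs]
    have hz : z ∈ s := by simp [hs]
    haveI := hCN s
    have hCy : IsClosed ({q : ↥X | (y : L) ≤ (q : L)}) := (hZar _).2 ⟨(y : L), rfl⟩
    have hCz : IsClosed ({q : ↥X | (z : L) ≤ (q : L)}) := (hZar _).2 ⟨(z : L), rfl⟩
    set A : Set ↥s := Subtype.val ⁻¹' {q : ↥X | (y : L) ≤ (q : L)} with hAdef
    set B : Set ↥s := Subtype.val ⁻¹' {q : ↥X | (z : L) ≤ (q : L)} with hBdef
    have hA : IsClosed A := hCy.preimage continuous_subtype_val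
    have hB : IsClosed B := hCz.preimage continuous_subtype_val
    have mem_s : ∀ p : ↥s, (p : ↥X) = m ∨ (p : ↥X) = y ∨ (p : ↥X) = z := fun p => p.2
    have hdisj : Disjoint A B := by
      rw [Set.disjoint_left]
      rintro p hpA hpB
      rcases mem_s p with h | h | h
      · have : (y : L) ≤ (m : L) := h ▸ hpA
        exact hmy.not_ge (Subtype.coe_le_coe.mp this)
      · have : (z : L) ≤ (y : L) := h ▸ hpB
        exact hzy (Subtype.coe_le_coe.mp this)
      · have : (y : L) ≤ (z : L) := h ▸ hpA
        exact hyz (Subtype.coe_le_coe.mp this)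
    obtain ⟨U, V, hUo, hVo, hAU, hBV, hUV⟩ := NormalSpace.normal A B hA hB hdisj
    have pyA : (⟨y, hy⟩ : ↥s) ∈ A := le_refl (y : L)
    have pzB : (⟨z, hz⟩ : ↥s) ∈ B := le_refl (z : L)
    have pmcase : (⟨m, hm⟩ : ↥s) ∉ U ∨ (⟨m, hm⟩ : ↥s) ∉ V := by
      by_contra h
      push_neg at h
      exact Set.disjoint_left.mp hUV h.1 h.2
    rcases pmcase with hmU | hmV
    · have : IsClosed Uᶜ := hUo.isClosed_compl
      rw [isClosed_induced_iff] at this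
      obtain ⟨D, hD, hDU⟩ := this
      obtain ⟨a, rfl⟩ := (hZar D).1 hD
      have ham : a ≤ (m : L) := by
        have : (⟨m, hm⟩ : ↥s) ∈ Uᶜ := hmU
        rw [← hDU] at this
        exact this
      have hay : (⟨y, hy⟩ : ↥s) ∈ Uᶜ := by
        rw [← hDU]
        exact le_trans ham (Subtype.coe_le_coe.mpr hmy.le)
      exact hay (hAU pyA)
    · have : IsClosed Vᶜ := hVo.isClosed_compl
      rw [isClosed_induced_iff] at this
      obtain ⟨D, hD, hDV⟩ := this
      obtain ⟨a, rfl⟩ := (hZar D).1 hD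
      have ham : a ≤ (m : L) := by
        have : (⟨m, hm⟩ : ↥s) ∈ Vᶜ := hmV
        rw [← hDV] at this
        exact this
      have haz : (⟨z, hz⟩ : ↥s) ∈ Vᶜ := by
        rw [← hDV]
        exact le_trans ham (Subtype.coe_le_coe.mpr hmz.le)
      exact haz (hBV pzB)
  refine ⟨?_, key⟩
  rintro ⟨T, ⟨hTne, htree, hchain⟩, hfin, y, hyT, z, hzT, hyzne⟩
  have hyz : ¬ y ≤ z := fun h => hyzne (hyT.2 z hzT.1 h).symm
  have hzy : ¬ z ≤ y := fun h => hyzne (hzT.2 y hyT.1 h)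
  obtain ⟨w, hwT, hwy, hwz⟩ := htree y hyT.1 z hzT.1 hyz hzy
  exact key ⟨w, y, z, hwy, hwz, hyz, hzy⟩
end
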